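/- Let U ⊆ ℝⁿ be open and let f, g, g^μ, g^{μ₁μ₂}, …, g^{μ₁…μ_r} : U → ℝ be smooth functions, where each g^{μ₁…μₖ} (2 ≤ k ≤ r) is symmetric in its indices. Then, with summation over all repeated greek indices, Σ_{k=0}^{r} ∂_{μ₁}⋯∂_{μₖ}(f g^{μ₁…μₖ}) = Σ_{k=0}^{r} Σ_{l=0}^{r−k} binom(k+l, k) · (∂_{μ₁}⋯∂_{μₖ} f)(∂_{ν₁}⋯∂_{ν_l} g^{μ₁…μₖ ν₁…ν_l}). -/

import Mathlib

/-!
Induction on the number `m` of indices. Differentiating the order-`m` identity for the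
symmetric family `ν ↦ G^{aν}` in the direction `a` and summing over `a`, the product rule splits
each term `(∂^j F)(∂^{m-j} G)` into one with `j + 1` derivatives on `F` and one with `j`; by
symmetry of `G` the new index may be moved to position `j`, so both are order-`(m+1)` terms
again, and Pascal's rule collects the binomial coefficients. Summing over `m ≤ r` and writing
`m = k + l` gives the formula.
-/

open scoped BigOperators

noncomputable section

/-- Partial derivative of a function on `ℝⁿ` in the coordinate direction `μ`. -/
def pd {n : ℕ} (μ : Fin n) (f : (Fin n → ℝ) → ℝ) : (Fin n → ℝ) → ℝ :=
  fun x => fderiv ℝ f x (Pi.single μ 1)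

/-- Iterated partial derivatives `∂_{μ₁}⋯∂_{μₖ}` along a list of coordinate directions. -/
def pds {n : ℕ} : List (Fin n) → ((Fin n → ℝ) → ℝ) → (Fin n → ℝ) → ℝ
  | [], f => f
  | μ :: l, f => pd μ (pds l f)

open Finset Set

section PartialDerivatives

variable {n : ℕ} {U : Set (Fin n → ℝ)} {F G : (Fin n → ℝ) → ℝ} {x : Fin n → ℝ}

theorem contDiffOn_pd (hU : IsOpen U) (hF : ContDiffOn ℝ (⊤ : ℕ∞) F U) (μ : Fin n) :
    ContDiffOn ℝ (⊤ : ℕ∞) (pd μ F) U :=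
  (hF.fderiv_of_isOpen hU le_rfl).clm_apply contDiffOn_const

theorem contDiffOn_pds (hU : IsOpen U) (hF : ContDiffOn ℝ (⊤ : ℕ∞) F U) :
    ∀ L : List (Fin n), ContDiffOn ℝ (⊤ : ℕ∞) (pds L F) U
  | [] => hF
  | μ :: L => contDiffOn_pd hU (contDiffOn_pds hU hF L) μ

theorem pd_congr (hU : IsOpen U) (h : EqOn F G U) (μ : Fin n) : EqOn (pd μ F) (pd μ G) U :=
  fun x hx => by simp only [pd, (Filter.eventuallyEq_of_mem (hU.mem_nhds hx) h).fderiv_eq]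

theorem pd_sum {ι : Type*} (s : Finset ι) {F : ι → (Fin n → ℝ) → ℝ}
    (h : ∀ i ∈ s, DifferentiableAt ℝ (F i) x) (μ : Fin n) :
    pd μ (fun y => ∑ i ∈ s, F i y) x = ∑ i ∈ s, pd μ (F i) x := by
  simp [pd, fderiv_fun_sum h]

theorem pd_const_mul (c : ℝ) (h : DifferentiableAt ℝ F x) (μ : Fin n) :
    pd μ (fun y => c * F y) x = c * pd μ F x := by
  simp [pd, fderiv_const_mul h c]

theorem pd_mul (hF : DifferentiableAt ℝ F x) (hG : DifferentiableAt ℝ G x) (μ : Fin n) :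
    pd μ (fun y => F y * G y) x = pd μ F x * G x + F x * pd μ G x := by
  simp only [pd, fderiv_fun_mul hF hG, add_apply,
    smul_apply, smul_eq_mul]
  ring

end PartialDerivatives

theorem List.ofFn_insertNth {α : Type*} {m : ℕ} (j : Fin (m + 1)) (a : α) (ν : Fin m → α) :
    List.ofFn (Fin.insertNth j a ν) = (List.ofFn ν).take j ++ a :: (List.ofFn ν).drop j := by
  induction m with
  | zero => simp [Fin.fin_one_eq_zero j, Fin.insertNth_zero']
  | succ m ih =>
    induction j using Fin.cases with
    | zero => simp [Fin.insertNth_zero']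
    | succ i =>
      induction ν using Fin.consCases with
      | cons b ν => rw [Fin.insertNth_succ_cons, List.ofFn_cons, List.ofFn_cons, ih]; rfl

theorem List.take_ofFn_insertNth {α : Type*} {m j : ℕ} (hj : j < m + 1) (a : α)
    (ν : Fin m → α) :
    (List.ofFn (Fin.insertNth ⟨j, hj⟩ a ν)).take j = (List.ofFn ν).take j := by
  rw [List.ofFn_insertNth]
  simp [Nat.le_of_lt_succ hj]

theorem List.drop_ofFn_insertNth {α : Type*} {m j : ℕ} (hj : j < m + 1) (a : α)
    (ν : Fin m → α) :
    (List.ofFn (Fin.insertNth ⟨j, hj⟩ a ν)).drop j = a :: (List.ofFn ν).drop j := by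
  rw [List.ofFn_insertNth]
  simp [Nat.le_of_lt_succ hj]

theorem Fintype.sum_pi_fin_succ_insertNth {α M : Type*} [Fintype α] [AddCommMonoid M] {m : ℕ}
    (j : Fin (m + 1)) (φ : (Fin (m + 1) → α) → M) :
    ∑ μ, φ μ = ∑ a, ∑ ν : Fin m → α, φ (j.insertNth a ν) := by
  rw [← (Fin.insertNthEquiv (fun _ => α) j).sum_comp, Fintype.sum_prod_type]
  rfl

def IsPermInvariant {α β : Type*} {m : ℕ} (G : (Fin m → α) → β) : Prop :=
  ∀ (σ : Equiv.Perm (Fin m)) (μ : Fin m → α), G (μ ∘ σ) = G μ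

namespace IsPermInvariant

variable {α β : Type*} {m : ℕ} {G : (Fin (m + 1) → α) → β}

theorem comp_cons (hG : IsPermInvariant G) (a : α) :
    IsPermInvariant fun ν => G (Fin.cons a ν) := by
  intro σ ν
  have : (Fin.cons a (ν ∘ σ) : Fin (m + 1) → α) =
      Fin.cons a ν ∘ Equiv.Perm.decomposeFin.symm (0, σ) := by
    ext i
    cases i using Fin.cases <;> simp
  exact (congrArg G this).trans (hG _ _)

theorem insertNth_eq_cons (hG : IsPermInvariant G) (j : Fin (m + 1)) (a : α) (ν : Fin m → α) :
    G (j.insertNth a ν) = G (Fin.cons a ν) := by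
  rw [← Fin.insertNth_comp_cycleRange_symm, hG]

end IsPermInvariant

theorem sum_range_choose_mul_add {R : Type*} [Semiring R] (m : ℕ) (B : ℕ → R) :
    ∑ j ∈ range (m + 1), (m.choose j : R) * (B (j + 1) + B j)
      = ∑ j ∈ range (m + 2), ((m + 1).choose j : R) * B j := by
  have hshift := sum_range_succ' (fun j => (m.choose j : R) * B j) (m + 1)
  rw [sum_range_succ, Nat.choose_succ_self, Nat.cast_zero, zero_mul, add_zero] at hshift
  rw [sum_range_succ' _ (m + 1)]
  simp only [Nat.choose_succ_succ', Nat.cast_add, add_mul, mul_add, sum_add_distrib, hshift]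
  simp only [Nat.choose_zero_right, Nat.cast_one, one_mul]
  abel

section Leibniz

variable {n m : ℕ} {U : Set (Fin n → ℝ)} {F : (Fin n → ℝ) → ℝ}

/-- `Σ_μ (∂_{μ₁}⋯∂_{μⱼ} F)(∂_{μⱼ₊₁}⋯∂_{μₘ} G^μ)`. -/
def leibnizTerm (F : (Fin n → ℝ) → ℝ) (G : (Fin m → Fin n) → (Fin n → ℝ) → ℝ) (j : ℕ) :
    (Fin n → ℝ) → ℝ :=
  fun x => ∑ μ : Fin m → Fin n,
    pds ((List.ofFn μ).take j) F x * pds ((List.ofFn μ).drop j) (G μ) x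

theorem contDiffOn_leibnizTerm (hU : IsOpen U) (hF : ContDiffOn ℝ (⊤ : ℕ∞) F U)
    {G : (Fin m → Fin n) → (Fin n → ℝ) → ℝ} (hG : ∀ μ, ContDiffOn ℝ (⊤ : ℕ∞) (G μ) U) (j : ℕ) :
    ContDiffOn ℝ (⊤ : ℕ∞) (leibnizTerm F G j) U :=
  ContDiffOn.sum fun μ _ => (contDiffOn_pds hU hF _).mul (contDiffOn_pds hU (hG μ) _)

theorem sum_pd_leibnizTerm_cons (hU : IsOpen U) (hF : ContDiffOn ℝ (⊤ : ℕ∞) F U)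
    {G : (Fin (m + 1) → Fin n) → (Fin n → ℝ) → ℝ} (hG : ∀ μ, ContDiffOn ℝ (⊤ : ℕ∞) (G μ) U)
    (hsym : IsPermInvariant G) {j : ℕ} (hj : j ≤ m) {x : Fin n → ℝ} (hx : x ∈ U) :
    ∑ a, pd a (leibnizTerm F (fun ν => G (Fin.cons a ν)) j) x
      = leibnizTerm F G (j + 1) x + leibnizTerm F G j x := by
  have hdiff {H : (Fin n → ℝ) → ℝ} (hH : ContDiffOn ℝ (⊤ : ℕ∞) H U) (L : List (Fin n)) :
      DifferentiableAt ℝ (pds L H) x :=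
    ((contDiffOn_pds hU hH L).differentiableOn (by simp)).differentiableAt (hU.mem_nhds hx)
  calc ∑ a, pd a (leibnizTerm F (fun ν => G (Fin.cons a ν)) j) x
      = ∑ a, ∑ ν : Fin m → Fin n,
          (pd a (pds ((List.ofFn ν).take j) F) x * pds ((List.ofFn ν).drop j) (G (Fin.cons a ν)) x
            + pds ((List.ofFn ν).take j) F x
              * pd a (pds ((List.ofFn ν).drop j) (G (Fin.cons a ν))) x) := by
        refine sum_congr rfl fun a _ => ?_
        unfold leibnizTerm
        rw [pd_sum]
        · exact sum_congr rfl fun ν _ => pd_mul (hdiff hF _) (hdiff (hG _) _) a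
        · exact fun ν _ => (hdiff hF _).mul (hdiff (hG _) _)
    _ = leibnizTerm F G (j + 1) x + leibnizTerm F G j x := by
        simp only [sum_add_distrib]
        congr 1
        · rw [leibnizTerm, Fintype.sum_pi_fin_succ_insertNth 0]
          simp only [Fin.insertNth_zero', List.ofFn_succ, Fin.cons_zero, Fin.cons_succ,
            List.take_succ_cons, List.drop_succ_cons, pds]
        -- reindex by inserting the new direction `a` at position `j`, which symmetry allows
        · rw [leibnizTerm, Fintype.sum_pi_fin_succ_insertNth ⟨j, Nat.lt_succ_of_le hj⟩]
          simp only [List.take_ofFn_insertNth, List.drop_ofFn_insertNth, hsym.insertNth_eq_cons,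
            pds]

theorem sum_pds_mul_eqOn_sum_leibnizTerm (hU : IsOpen U) (hF : ContDiffOn ℝ (⊤ : ℕ∞) F U)
    {G : (Fin m → Fin n) → (Fin n → ℝ) → ℝ} (hG : ∀ μ, ContDiffOn ℝ (⊤ : ℕ∞) (G μ) U)
    (hsym : IsPermInvariant G) :
    EqOn (fun x => ∑ μ : Fin m → Fin n, pds (List.ofFn μ) (fun y => F y * G μ y) x)
      (fun x => ∑ j ∈ range (m + 1), (m.choose j : ℝ) * leibnizTerm F G j x) U := by
  induction m with
  | zero =>
    intro x _
    simp [leibnizTerm, pds]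
  | succ m ih =>
    intro x hx
    have hdiff {H : (Fin n → ℝ) → ℝ} (hH : ContDiffOn ℝ (⊤ : ℕ∞) H U) :
        DifferentiableAt ℝ H x :=
      (hH.differentiableOn (by simp)).differentiableAt (hU.mem_nhds hx)
    calc ∑ μ : Fin (m + 1) → Fin n, pds (List.ofFn μ) (fun y => F y * G μ y) x
        = ∑ a, pd a (fun y => ∑ ν : Fin m → Fin n,
            pds (List.ofFn ν) (fun y => F y * G (Fin.cons a ν) y) y) x := by
          rw [Fintype.sum_pi_fin_succ_insertNth 0]
          refine sum_congr rfl fun a _ => ?_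
          rw [pd_sum _ fun ν _ => hdiff (contDiffOn_pds hU (hF.mul (hG _)) _)]
          simp only [Fin.insertNth_zero', List.ofFn_succ, Fin.cons_zero, Fin.cons_succ, pds]
      _ = ∑ a, pd a (fun y => ∑ j ∈ range (m + 1),
            (m.choose j : ℝ) * leibnizTerm F (fun ν => G (Fin.cons a ν)) j y) x :=
          sum_congr rfl fun a _ =>
            pd_congr hU (ih (fun ν => hG _) (hsym.comp_cons a)) a hx
      _ = ∑ j ∈ range (m + 1), (m.choose j : ℝ) *
            ∑ a, pd a (leibnizTerm F (fun ν => G (Fin.cons a ν)) j) x := by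
          have hL (a : Fin n) (j : ℕ) :=
            hdiff (contDiffOn_leibnizTerm hU hF (fun ν => hG (Fin.cons a ν)) j)
          simp only [mul_sum]
          rw [sum_comm]
          refine sum_congr rfl fun a _ => ?_
          rw [pd_sum _ fun j _ => (hL a j).const_mul _]
          exact sum_congr rfl fun j _ => pd_const_mul _ (hL a j) a
      _ = ∑ j ∈ range (m + 1), (m.choose j : ℝ) *
            (leibnizTerm F G (j + 1) x + leibnizTerm F G j x) := by
          refine sum_congr rfl fun j hj => ?_
          rw [sum_pd_leibnizTerm_cons hU hF hG hsym (Nat.lt_succ_iff.mp (mem_range.mp hj)) hx]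
      _ = ∑ j ∈ range (m + 2), ((m + 1).choose j : ℝ) * leibnizTerm F G j x :=
          sum_range_choose_mul_add m fun j => leibnizTerm F G j x

end Leibniz

theorem sum_range_triangle {M : Type*} [AddCommMonoid M] (r : ℕ) (T : ℕ → ℕ → M) :
    ∑ m ∈ range (r + 1), ∑ j ∈ range (m + 1), T m j
      = ∑ k ∈ range (r + 1), ∑ l ∈ range (r - k + 1), T (k + l) k := by
  calc _ = ∑ m ∈ range (r + 1), ∑ j ∈ range (m + 1), T (j + (m - j)) j := by
        refine sum_congr rfl fun m _ => sum_congr rfl fun j hj => ?_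
        rw [Nat.add_sub_cancel' (Nat.lt_succ_iff.mp (mem_range.mp hj))]
    _ = ∑ k ∈ range (r + 1), ∑ l ∈ range (r + 1 - k), T (k + l) k :=
        sum_range_diag_flip (r + 1) fun k l => T (k + l) k
    _ = _ := by
        refine sum_congr rfl fun k hk => ?_
        rw [Nat.sub_add_comm (Nat.lt_succ_iff.mp (mem_range.mp hk))]

/-- **Higher product formula, summed version** (Corollary A.2).
Let `U ⊆ ℝⁿ` be open and `f, g, g^μ, …, g^{μ₁…μ_r}` smooth on `U`, each `g^{μ₁…μₖ}`
symmetric in its indices.  Then (summing over all repeated greek indices)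
`Σ_{k=0}^{r} ∂_{μ₁}⋯∂_{μₖ}(f g^{μ₁…μₖ})
  = Σ_{k=0}^{r} Σ_{l=0}^{r−k} binom(k+l,k)
      (∂_{μ₁}⋯∂_{μₖ} f)(∂_{ν₁}⋯∂_{ν_l} g^{μ₁…μₖ ν₁…ν_l})`. -/
theorem higher_product_formula_sum
    (n r : ℕ) (U : Set (Fin n → ℝ)) (hU : IsOpen U)
    (f : (Fin n → ℝ) → ℝ) (hf : ContDiffOn ℝ (⊤ : ℕ∞) f U)
    (g : (k : ℕ) → (Fin k → Fin n) → (Fin n → ℝ) → ℝ)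
    (hg : ∀ k, k ≤ r → ∀ μ, ContDiffOn ℝ (⊤ : ℕ∞) (g k μ) U)
    (hsym : ∀ k, k ≤ r → ∀ (σ : Equiv.Perm (Fin k)) (μ : Fin k → Fin n),
      g k (μ ∘ σ) = g k μ) :
    ∀ x ∈ U,
      ∑ k ∈ Finset.range (r + 1),
        ∑ μ : Fin k → Fin n, pds (List.ofFn μ) (fun y => f y * g k μ y) x
      = ∑ k ∈ Finset.range (r + 1), ∑ l ∈ Finset.range (r - k + 1),
          ((k + l).choose k : ℝ) *
            ∑ μ : Fin (k + l) → Fin n,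
              pds ((List.ofFn μ).take k) f x *
                pds ((List.ofFn μ).drop k) (g (k + l) μ) x := by
  intro x hx
  refine (sum_congr rfl fun k hk => ?_).trans
    (sum_range_triangle r fun k j => (k.choose j : ℝ) * leibnizTerm f (g k) j x)
  have hkr := Nat.lt_succ_iff.mp (mem_range.mp hk)
  exact sum_pds_mul_eqOn_sum_leibnizTerm hU hf (hg k hkr) (hsym k hkr) hx
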